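/- Let E = {x ∈ ℝⁿ : x₁²/ℓ₁² + ⋯ + x_n²/ℓ_n² < 1} be an open ellipsoid with semi-axes ℓ₁, …, ℓ_n > 0, and let a = (0, …, 0, −α) with 0 ≤ α < ℓ_n. Then |(E − a)°| = (ℓ_n^{(n−1)/2} / (ℓ₁⋯ℓ_{n−1})) · |B(0,1)| / [(ℓ_n − α)(2 − (ℓ_n − α)/ℓ_n)]^{(n+1)/2}. -/

import Mathlib

/-!
For the symmetric map `D = diag ℓ` one has `E - a = D '' (B - b)` with `B` the open unit ball and
`b = D⁻¹ a`, so polarity gives `(E - a)° = D⁻¹' (B - b)°` and `|(E - a)°| = |det D|⁻¹ |(B - b)°|`.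
By Cauchy–Schwarz, `(B - b)° = {z | ‖z‖ ≤ 1 + ⟪b, z⟫}`. For `b = β eₙ` and `q = 1 - β²`, squaring
and completing the square turn this into the ellipsoid `q ‖z'‖² + (q zₙ - β)² ≤ 1`, the preimage
of a unit ball under `diag (√q, …, √q, q)`, whose volume is `|B| / q ^ ((n + 1) / 2)`.
-/

open scoped RealInnerProductSpace
open MeasureTheory

def realPolar {n : ℕ} (S : Set (EuclideanSpace ℝ (Fin n))) :
    Set (EuclideanSpace ℝ (Fin n)) :=
  {y | ∀ x ∈ S, ⟪x, y⟫ ≤ 1}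

theorem forall_mem_ball_inner_le_iff {F : Type*} [NormedAddCommGroup F] [InnerProductSpace ℝ F]
    (z : F) (t : ℝ) : (∀ x ∈ Metric.ball (0 : F) 1, ⟪x, z⟫ ≤ t) ↔ ‖z‖ ≤ t := by
  refine ⟨fun h => ?_, fun h x hx => ?_⟩
  · have hclosed : ∀ x ∈ Metric.closedBall (0 : F) 1, ⟪x, z⟫ ≤ t := by
      rw [← closure_ball 0 one_ne_zero]
      exact closure_minimal (show Metric.ball (0 : F) 1 ⊆ {x | ⟪x, z⟫ ≤ t} from h)
        (isClosed_le (by fun_prop : Continuous fun x : F => ⟪x, z⟫) continuous_const)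
    have hunit : ‖z‖⁻¹ • z ∈ Metric.closedBall (0 : F) 1 := by
      rw [mem_closedBall_zero_iff, norm_smul, norm_inv, norm_norm]
      exact inv_mul_le_one
    simpa [real_inner_smul_left, real_inner_self_eq_norm_sq, sq, ← mul_assoc,
      inv_mul_mul_self] using hclosed _ hunit
  · calc ⟪x, z⟫ ≤ ‖x‖ * ‖z‖ := real_inner_le_norm x z
      _ ≤ ‖z‖ := mul_le_of_le_one_left (norm_nonneg z) (mem_ball_zero_iff.1 hx).le
      _ ≤ t := h

theorem image_sub_map_image {G H F : Type*} [AddGroup G] [AddGroup H] [FunLike F G H]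
    [AddMonoidHomClass F G H] (f : F) (S : Set G) (b : G) :
    (· - f b) '' (f '' S) = f '' ((· - b) '' S) := by
  simp only [Set.image_image, map_sub]

section Polar

variable {n : ℕ}

theorem realPolar_image_of_isSymmetric
    {T : EuclideanSpace ℝ (Fin n) →ₗ[ℝ] EuclideanSpace ℝ (Fin n)} (hT : T.IsSymmetric)
    (S : Set (EuclideanSpace ℝ (Fin n))) : realPolar (T '' S) = T ⁻¹' realPolar S := by
  ext y
  simp [realPolar, hT _ y]

theorem volume_realPolar_image_of_isSymmetric
    {T : EuclideanSpace ℝ (Fin n) →ₗ[ℝ] EuclideanSpace ℝ (Fin n)} (hT : T.IsSymmetric)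
    (hdet : LinearMap.det T ≠ 0) (S : Set (EuclideanSpace ℝ (Fin n))) :
    volume (realPolar (T '' S)) = ENNReal.ofReal |(LinearMap.det T)⁻¹| * volume (realPolar S) := by
  rw [realPolar_image_of_isSymmetric hT, Measure.addHaar_preimage_linearMap _ hdet]

theorem realPolar_image_sub_ball (b : EuclideanSpace ℝ (Fin n)) :
    realPolar ((· - b) '' Metric.ball 0 1) = {z | ‖z‖ ≤ 1 + ⟪b, z⟫} := by
  ext z
  simp only [realPolar, Set.forall_mem_image, inner_sub_left, sub_le_iff_le_add,
    Set.mem_ofPred_eq]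
  exact forall_mem_ball_inner_le_iff z _

end Polar

section Diagonal

variable {ι : Type*} [Fintype ι] [DecidableEq ι]

theorem toEuclideanLin_diagonal_apply (d : ι → ℝ) (x : EuclideanSpace ℝ ι) (i : ι) :
    Matrix.toEuclideanLin (Matrix.diagonal d) x i = d i * x i := by
  simp [Matrix.toLpLin_apply, Matrix.mulVec_diagonal]

theorem isSymmetric_toEuclideanLin_diagonal (d : ι → ℝ) :
    (Matrix.toEuclideanLin (Matrix.diagonal d)).IsSymmetric :=
  Matrix.isSymmetric_toEuclideanLin_iff.2 (Matrix.isHermitian_diagonal d)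

theorem det_toEuclideanLin_diagonal (d : ι → ℝ) :
    LinearMap.det (Matrix.toEuclideanLin (Matrix.diagonal d)) = ∏ i, d i := by
  rw [Matrix.toEuclideanLin_eq_toLin_orthonormal, LinearMap.det_toLin, Matrix.det_diagonal]

theorem image_toEuclideanLin_diagonal_ball (ℓ : ι → ℝ) (hℓ : ∀ i, ℓ i ≠ 0) :
    Matrix.toEuclideanLin (Matrix.diagonal ℓ) '' Metric.ball 0 1
      = {x | ∑ i, x i ^ 2 / ℓ i ^ 2 < 1} := by
  rw [Set.image_eq_preimage_of_inverse (g := Matrix.toEuclideanLin (Matrix.diagonal ℓ⁻¹))]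
  · ext x
    simp [← sq_lt_one_iff₀ (norm_nonneg _), EuclideanSpace.real_norm_sq_eq,
      toEuclideanLin_diagonal_apply, mul_pow, div_eq_inv_mul]
  all_goals intro x; ext i; simp [toEuclideanLin_diagonal_apply, hℓ i]

end Diagonal

theorem sqrt_add_sq_le_one_add_mul_iff {W x β : ℝ} (hW : 0 ≤ W) (hβ : β ^ 2 < 1) :
    √(W + x ^ 2) ≤ 1 + β * x ↔ (1 - β ^ 2) * W + ((1 - β ^ 2) * x - β) ^ 2 ≤ 1 := by
  have hq : 0 < 1 - β ^ 2 := sub_pos.2 hβ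
  have hβ₁ : 0 < 1 - β := by nlinarith
  have hβ₂ : 0 < 1 + β := by nlinarith
  -- `1 - (1 - β²) W - ((1 - β²) x - β)² = (1 - β²) ((1 + β x)² - W - x²)`
  rw [Real.sqrt_le_iff]
  constructor
  · rintro ⟨-, h⟩
    nlinarith [mul_nonneg hq.le (sub_nonneg.2 h)]
  · intro h
    have hsq : ((1 - β ^ 2) * x - β) ^ 2 ≤ 1 ^ 2 := by nlinarith [mul_nonneg hq.le hW]
    obtain ⟨h₁, h₂⟩ := abs_le_of_sq_le_sq' hsq zero_le_one
    refine ⟨?_, ?_⟩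
    · -- `(1 + β) (1 + (q x - β)) + (1 - β) (1 - (q x - β)) = 2 q (1 + β x)` with `q = 1 - β²`
      nlinarith [mul_nonneg hβ₂.le (neg_le_iff_add_nonneg.1 h₁),
        mul_nonneg hβ₁.le (sub_nonneg.2 h₂)]
    · nlinarith

section UnitBall

variable {m : ℕ}

theorem realPolar_image_sub_ball_smul_single_last {β : ℝ} (hβ : β ^ 2 < 1) :
    realPolar ((· - β • EuclideanSpace.single (Fin.last m) 1) '' Metric.ball 0 1) =
      Matrix.toEuclideanLin (Matrix.diagonal (Fin.lastCases (1 - β ^ 2) fun _ => √(1 - β ^ 2)))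
        ⁻¹' Metric.closedBall (β • EuclideanSpace.single (Fin.last m) 1) 1 := by
  have hq : 0 ≤ 1 - β ^ 2 := (sub_pos.2 hβ).le
  rw [realPolar_image_sub_ball]
  ext z
  have hW : 0 ≤ ∑ i : Fin m, z i.castSucc ^ 2 := Finset.sum_nonneg fun i _ => sq_nonneg _
  have hz : ‖z‖ = √(∑ i : Fin m, z i.castSucc ^ 2 + z (Fin.last m) ^ 2) := by
    rw [EuclideanSpace.norm_eq, Fin.sum_univ_castSucc]
    simp
  have hAz : ‖Matrix.toEuclideanLin
      (Matrix.diagonal (Fin.lastCases (1 - β ^ 2) fun _ => √(1 - β ^ 2))) z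
        - β • EuclideanSpace.single (Fin.last m) 1‖ ^ 2
      = (1 - β ^ 2) * ∑ i : Fin m, z i.castSucc ^ 2 + ((1 - β ^ 2) * z (Fin.last m) - β) ^ 2 := by
    simp [EuclideanSpace.real_norm_sq_eq, Fin.sum_univ_castSucc, toEuclideanLin_diagonal_apply,
      Fin.castSucc_ne_last, mul_pow, Real.sq_sqrt hq, Finset.mul_sum]
  simp only [Set.mem_ofPred_eq, Set.mem_preimage, Metric.mem_closedBall, dist_eq_norm,
    real_inner_smul_left, EuclideanSpace.inner_single_left, map_one, one_mul]
  rw [← sq_le_one_iff₀ (norm_nonneg _), hAz, hz]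
  exact sqrt_add_sq_le_one_add_mul_iff hW hβ

theorem volume_realPolar_image_sub_ball_smul_single_last {β : ℝ} (hβ : β ^ 2 < 1) :
    volume (realPolar ((· - β • EuclideanSpace.single (Fin.last m) 1) '' Metric.ball 0 1)) =
      ENNReal.ofReal ((volume (Metric.ball (0 : EuclideanSpace ℝ (Fin (m + 1))) 1)).toReal
        / (1 - β ^ 2) ^ (((m : ℝ) + 2) / 2)) := by
  have hq : 0 < 1 - β ^ 2 := sub_pos.2 hβ
  have hpow : 0 < (1 - β ^ 2) ^ (((m : ℝ) + 2) / 2) := Real.rpow_pos_of_pos hq _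
  have hdet : LinearMap.det (Matrix.toEuclideanLin
      (Matrix.diagonal (Fin.lastCases (1 - β ^ 2) fun _ => √(1 - β ^ 2))) :
        EuclideanSpace ℝ (Fin (m + 1)) →ₗ[ℝ] EuclideanSpace ℝ (Fin (m + 1)))
      = (1 - β ^ 2) ^ (((m : ℝ) + 2) / 2) := by
    rw [det_toEuclideanLin_diagonal, Fin.prod_univ_castSucc]
    simp only [Fin.lastCases_castSucc, Fin.lastCases_last, Finset.prod_const, Finset.card_univ,
      Fintype.card_fin]
    rw [Real.sqrt_eq_rpow, ← Real.rpow_mul_natCast hq.le, ← Real.rpow_add_one hq.ne']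
    ring_nf
  rw [realPolar_image_sub_ball_smul_single_last hβ,
    Measure.addHaar_preimage_linearMap _ (hdet ▸ hpow.ne'), hdet,
    Measure.addHaar_closedBall _ _ zero_le_one, one_pow, ENNReal.ofReal_one, one_mul,
    abs_of_pos (inv_pos.2 hpow), ENNReal.ofReal_div_of_pos hpow,
    ENNReal.ofReal_toReal measure_ball_lt_top.ne, ENNReal.ofReal_inv_of_pos hpow,
    ENNReal.div_eq_inv_mul]

end UnitBall

/-- For the open ellipsoid `E` with semi-axes `ℓ i > 0`
(here `n = m+1`, last axis `ℓₙ = ℓ (Fin.last m)`) and `a = -α eₙ` with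
`0 ≤ α < ℓₙ`:
`|(E-a)°| = (ℓₙ^{(n-1)/2}/(ℓ₁⋯ℓ_{n-1})) |B(0,1)| / ((ℓₙ-α)(2-(ℓₙ-α)/ℓₙ))^{(n+1)/2}`. -/
theorem stmt10 {m : ℕ} (ℓ : Fin (m + 1) → ℝ) (hℓ : ∀ i, 0 < ℓ i)
    (α : ℝ) (hα0 : 0 ≤ α) (hα1 : α < ℓ (Fin.last m))
    (a : EuclideanSpace ℝ (Fin (m + 1)))
    (haof : a = (-α) • EuclideanSpace.single (Fin.last m) (1 : ℝ))
    (E : Set (EuclideanSpace ℝ (Fin (m + 1))))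
    (hE : E = {x | (∑ i, (x i) ^ 2 / (ℓ i) ^ 2) < 1}) :
    volume (realPolar ((fun x => x - a) '' E))
      = ENNReal.ofReal
          ((ℓ (Fin.last m)) ^ ((m : ℝ) / 2) / (∏ i : Fin m, ℓ i.castSucc)
            * (volume (Metric.ball (0 : EuclideanSpace ℝ (Fin (m + 1))) 1)).toReal
            / (((ℓ (Fin.last m) - α) * (2 - (ℓ (Fin.last m) - α) / ℓ (Fin.last m)))
                ^ (((m : ℝ) + 2) / 2))) := by
  set L := ℓ (Fin.last m)
  set D := Matrix.toEuclideanLin (Matrix.diagonal ℓ)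
  set b := (-α / L) • EuclideanSpace.single (Fin.last m) (1 : ℝ)
  have hL : 0 < L := hℓ _
  have hP : 0 < ∏ i : Fin m, ℓ i.castSucc := Finset.prod_pos fun i _ => hℓ _
  have hβ : (-α / L) ^ 2 < 1 := by
    rw [div_pow, neg_sq, div_lt_one (by positivity)]
    nlinarith
  have hdet : LinearMap.det D = (∏ i : Fin m, ℓ i.castSucc) * L := by
    rw [det_toEuclideanLin_diagonal, Fin.prod_univ_castSucc]
  have hDb : D b = a := by
    ext i
    by_cases hi : i = Fin.last m <;>
      simp [D, b, L, haof, toEuclideanLin_diagonal_apply, hi, (hℓ _).ne']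
  have hEa : (· - a) '' E = D '' ((· - b) '' Metric.ball 0 1) := by
    rw [hE, ← image_toEuclideanLin_diagonal_ball ℓ fun i => (hℓ i).ne', ← hDb,
      image_sub_map_image]
  rw [hEa, volume_realPolar_image_of_isSymmetric (isSymmetric_toEuclideanLin_diagonal ℓ)
      (hdet ▸ (mul_pos hP hL).ne'), volume_realPolar_image_sub_ball_smul_single_last hβ,
    ← ENNReal.ofReal_mul (abs_nonneg _), hdet, abs_of_pos (inv_pos.2 (mul_pos hP hL))]
  congr 1
  have hq : 0 < 1 - (-α / L) ^ 2 := sub_pos.2 hβ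
  have hfactor : (L - α) * (2 - (L - α) / L) = L * (1 - (-α / L) ^ 2) := by
    field_simp
    ring
  rw [hfactor, Real.mul_rpow hL.le hq.le, add_div, div_self two_ne_zero,
    Real.rpow_add_one hL.ne']
  field_simp
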